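/- For n ≥ 3, the function w(s) = φ(s)^{(n-4)/2} (φ(s) φ'(s) + ψ(s) ψ'(s)) satisfies L₁ w = 0, where L₁ = ∂_s² − (n−1) − ((n−2)/2)² + (n(3n−2)/4) φ^{2−2n}. -/

import Mathlib

/-- The profile function `φ` of the unit `n`-catenoid: `φ(s)^{n-1} = cosh((n-1)s)`. -/
noncomputable def catPhi (n : ℕ) (s : ℝ) : ℝ :=
  Real.cosh (((n : ℝ) - 1) * s) ^ ((1 : ℝ) / ((n : ℝ) - 1))

/-- The height function `ψ(s) = ∫₀^s φ(t)^{2-n} dt` of the unit `n`-catenoid. -/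
noncomputable def catPsi (n : ℕ) (s : ℝ) : ℝ :=
  ∫ t in (0 : ℝ)..s, catPhi n t ^ ((2 : ℝ) - n)

/-!
With `m = n - 1` and `c = cosh (m s)` we have `φ = c^{1/m}` and `ψ' = c^{(1-m)/m}`, so
`w = c^a sinh (m s) + ψ c^b` with `a = (1-m)/(2m)` and `b = -(m+1)/(2m) = -1 - a`;
here `c^b = φ^{-n/2}` is itself a solution of `L₁ u = 0`.
Every term of `w''` is then a power of `c` times `sinh (m s)` or `ψ`, and `sinh² = cosh² - 1`
reduces `L₁ w` to the exponent identities `m²(a+1)² = m²b² = ((m+1)/2)²`,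
`m²b(b-1) = n(3n-2)/4` and `m²a(a-1) = n(3n-2)/4 - 2m`.
-/

open Real

section CoshPowers

variable (m : ℝ)

theorem hasDerivAt_cosh_mul_rpow (p t : ℝ) :
    HasDerivAt (fun u => cosh (m * u) ^ p) (m * p * cosh (m * t) ^ (p - 1) * sinh (m * t)) t := by
  refine (((hasDerivAt_id' t).const_mul m).cosh.rpow_const (p := p)
    (Or.inl (cosh_pos (m * t)).ne')).congr_deriv ?_
  ring

theorem hasDerivAt_cosh_mul_rpow_mul_sinh (p t : ℝ) :
    HasDerivAt (fun u => cosh (m * u) ^ p * sinh (m * u))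
      (m * ((p + 1) * cosh (m * t) ^ (p + 1) - p * cosh (m * t) ^ (p - 1))) t := by
  have hc : cosh (m * t) ≠ 0 := (cosh_pos (m * t)).ne'
  have h₁ : cosh (m * t) ^ (p + 1) = cosh (m * t) ^ p * cosh (m * t) := rpow_add_one hc p
  have h₂ : cosh (m * t) ^ p = cosh (m * t) ^ (p - 1) * cosh (m * t) := by
    rw [← rpow_add_one hc, sub_add_cancel]
  refine ((hasDerivAt_cosh_mul_rpow m p t).mul
    ((hasDerivAt_id' t).const_mul m).sinh).congr_deriv ?_
  linear_combination -(m * (p + 1)) * h₁ - m * p * cosh (m * t) * h₂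
    - m * p * cosh (m * t) ^ (p - 1) * cosh_sq (m * t)

theorem cosh_mul_rpow_mul_cosh_mul_rpow {p q r : ℝ} (h : p + q = r) (t : ℝ) :
    cosh (m * t) ^ p * cosh (m * t) ^ q = cosh (m * t) ^ r := by
  rw [← h, rpow_add (cosh_pos (m * t))]

end CoshPowers

theorem deriv_deriv_cosh_rpow_mul_sinh_add_mul_cosh_rpow {m a b q : ℝ} (hma : m * a = (1 - m) / 2)
    (hmb : m * b = -(m + 1) / 2) (hmq : m * q = 1 - m) {ψ w : ℝ → ℝ}
    (hψ : ∀ t, HasDerivAt ψ (cosh (m * t) ^ q) t)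
    (hw : w = fun t => cosh (m * t) ^ a * sinh (m * t) + ψ t * cosh (m * t) ^ b) (s : ℝ) :
    deriv (deriv w) s = ((m + 1) / 2) ^ 2 * w s
      - (m + 1) * (3 * m + 1) / 4 * cosh (m * s) ^ (-2 : ℝ) * w s := by
  have hm : m ≠ 0 := by rintro rfl; norm_num at hma
  have hab : a + b = -1 := mul_left_cancel₀ hm (by linear_combination hma + hmb)
  obtain rfl : q = 2 * a := mul_left_cancel₀ hm (by linear_combination hmq - 2 * hma)
  have hdw : ∀ t, HasDerivAt w ((m + 1) / 2 * (cosh (m * t) ^ (a + 1) + cosh (m * t) ^ (a - 1)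
      - ψ t * (cosh (m * t) ^ (b - 1) * sinh (m * t)))) t := by
    intro t
    subst hw
    refine ((hasDerivAt_cosh_mul_rpow_mul_sinh m a t).add
      ((hψ t).mul (hasDerivAt_cosh_mul_rpow m b t))).congr_deriv ?_
    rw [cosh_mul_rpow_mul_cosh_mul_rpow m (r := a - 1) (by linear_combination hab)]
    linear_combination (cosh (m * t) ^ (a + 1) - cosh (m * t) ^ (a - 1)) * hma
      + ψ t * cosh (m * t) ^ (b - 1) * sinh (m * t) * hmb
  have hd2w := (((hasDerivAt_cosh_mul_rpow m (a + 1) s).add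
    (hasDerivAt_cosh_mul_rpow m (a - 1) s)).sub
    ((hψ s).mul (hasDerivAt_cosh_mul_rpow_mul_sinh m (b - 1) s))).const_mul ((m + 1) / 2)
  rw [funext fun t => (hdw t).deriv]
  refine hd2w.deriv.trans ?_
  rw [hw, add_sub_cancel_right, sub_add_cancel, sub_sub, sub_sub, one_add_one_eq_two]
  have e₁ := cosh_mul_rpow_mul_cosh_mul_rpow m (p := 2 * a) (q := b - 1) (r := a - 2)
    (by linear_combination hab) s
  have e₂ := cosh_mul_rpow_mul_cosh_mul_rpow m (p := -2) (q := a) (r := a - 2) (by ring) s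
  have e₃ := cosh_mul_rpow_mul_cosh_mul_rpow m (p := -2) (q := b) (r := b - 2) (by ring) s
  linear_combination
    (m + 1) / 2 * (cosh (m * s) ^ a + cosh (m * s) ^ (a - 2)) * sinh (m * s) * hma
    + (m + 1) / 2 * ψ s * (cosh (m * s) ^ (b - 2) - cosh (m * s) ^ b) * hmb
    - (m + 1) / 2 * sinh (m * s) * e₁ + (m + 1) * (3 * m + 1) / 4 * sinh (m * s) * e₂
    + (m + 1) * (3 * m + 1) / 4 * ψ s * e₃

section Catenoid

variable {n : ℕ}

theorem catPhi_rpow (q s : ℝ) :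
    catPhi n s ^ q = cosh (((n : ℝ) - 1) * s) ^ (q / ((n : ℝ) - 1)) := by
  rw [catPhi, ← rpow_mul (cosh_pos _).le]
  ring_nf

theorem hasDerivAt_catPhi (hn : (n : ℝ) - 1 ≠ 0) (s : ℝ) :
    HasDerivAt (catPhi n)
      (cosh (((n : ℝ) - 1) * s) ^ (1 / ((n : ℝ) - 1) - 1) * sinh (((n : ℝ) - 1) * s)) s :=
  (hasDerivAt_cosh_mul_rpow _ _ s).congr_deriv (by field_simp)

theorem continuous_catPhi : Continuous (catPhi n) :=
  (continuous_cosh.comp (continuous_const_mul _)).rpow_const fun _ => Or.inl (cosh_pos _).ne'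

theorem hasDerivAt_catPsi (s : ℝ) : HasDerivAt (catPsi n) (catPhi n s ^ ((2 : ℝ) - n)) s :=
  ((continuous_catPhi.rpow_const fun _ => Or.inl (rpow_pos_of_pos (cosh_pos _) _).ne')
    |>.integral_hasStrictDerivAt 0 s).hasDerivAt

theorem catPhi_rpow_mul_eq (hn : (n : ℝ) - 1 ≠ 0) (s : ℝ) :
    catPhi n s ^ (((n : ℝ) - 4) / 2) *
      (catPhi n s * deriv (catPhi n) s + catPsi n s * deriv (catPsi n) s) =
    cosh (((n : ℝ) - 1) * s) ^ ((2 - n) / (2 * ((n : ℝ) - 1))) * sinh (((n : ℝ) - 1) * s)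
      + catPsi n s * cosh (((n : ℝ) - 1) * s) ^ (-n / (2 * ((n : ℝ) - 1))) := by
  rw [(hasDerivAt_catPhi hn s).deriv, (hasDerivAt_catPsi s).deriv, catPhi_rpow, catPhi_rpow,
    catPhi]
  set m : ℝ := (n : ℝ) - 1
  have e₁ := cosh_mul_rpow_mul_cosh_mul_rpow m (p := 1 / m) (q := 1 / m - 1) (r := 2 / m - 1)
    (by ring) s
  have e₂ := cosh_mul_rpow_mul_cosh_mul_rpow m (p := ((n : ℝ) - 4) / 2 / m) (q := 2 / m - 1)
    (r := (2 - n) / (2 * m)) (by field_simp; ring) s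
  have e₃ := cosh_mul_rpow_mul_cosh_mul_rpow m (p := ((n : ℝ) - 4) / 2 / m)
    (q := (2 - n) / m) (r := -n / (2 * m)) (by field_simp; ring) s
  linear_combination cosh (m * s) ^ (((n : ℝ) - 4) / 2 / m) * sinh (m * s) * e₁
    + sinh (m * s) * e₂ + catPsi n s * e₃

end Catenoid

/-- `w = φ^{(n-4)/2}(φ φ' + ψ ψ')` solves `L₁ w = 0` where
`L₁ = ∂_s² − (n−1) − ((n−2)/2)² + (n(3n−2)/4) φ^{2−2n}`. -/
theorem scherk_stmt9 (n : ℕ) (hn : 3 ≤ n)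
    (w : ℝ → ℝ)
    (hw : ∀ s : ℝ, w s = catPhi n s ^ (((n : ℝ) - 4) / 2) *
      (catPhi n s * deriv (catPhi n) s + catPsi n s * deriv (catPsi n) s)) :
    ∀ s : ℝ,
      deriv (deriv w) s - ((n : ℝ) - 1) * w s - (((n : ℝ) - 2) / 2) ^ 2 * w s
        + ((n : ℝ) * (3 * (n : ℝ) - 2) / 4) * catPhi n s ^ ((2 : ℝ) - 2 * n) * w s = 0 := by
  intro s
  have hm : (n : ℝ) - 1 ≠ 0 := by
    have : (3 : ℝ) ≤ n := by exact_mod_cast hn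
    linarith
  have hψ t : HasDerivAt (catPsi n)
      (cosh (((n : ℝ) - 1) * t) ^ ((2 - n) / ((n : ℝ) - 1))) t := by
    simpa only [catPhi_rpow] using hasDerivAt_catPsi t
  have hode := deriv_deriv_cosh_rpow_mul_sinh_add_mul_cosh_rpow (by field_simp; ring)
    (by field_simp; ring) (by field_simp; ring) hψ
    (funext fun t => (hw t).trans (catPhi_rpow_mul_eq hm t)) s
  rw [hode, catPhi_rpow, show (2 - 2 * (n : ℝ)) / ((n : ℝ) - 1) = -2 by field_simp; ring]
  ring
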